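/- Let α = 1 and β > 0 (so r = 1), and fix δ > 0. Define K(z) = Σ_{k=1}^∞ 1/(k (z + k^β)). Then there exists C such that for all z with |arg z| < π − δ and |z| ≥ 2, |z K'(z)| ≤ C log|z| / |z|. -/

import Mathlib

/-!
In the sector `|arg w| ≤ π - δ` one has `sin (δ / 2) * (‖w‖ + t) ≤ ‖w + t‖` for every `t ≥ 0`.
This bounds the terms of `K` uniformly on the open sector by a summable sequence, so `K` may be
differentiated termwise, `K' z = -∑ 1 / (k (z + k ^ β) ^ 2)`, and it gives
`‖K' z‖ ≤ sin (δ / 2) ^ (-2) * ∑ 1 / (k (‖z‖ + k ^ β) ^ 2)`. Splitting this real series at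
`N = ⌈‖z‖ ^ (1 / β)⌉`, the head is at most the harmonic number
`H_N / ‖z‖ ^ 2 = O(log ‖z‖ / ‖z‖ ^ 2)` and the tail at most
`∑_{k ≥ N} k ^ (-1 - 2β) = O(N ^ (-2β)) = O(‖z‖ ^ (-2))`.
-/

open Complex Finset
open scoped Real

lemma sin_half_mul_le_norm_add_ofReal {δ : ℝ} (hδ : 0 ≤ δ) {z : ℂ} (hz : |z.arg| ≤ π - δ)
    {t : ℝ} (ht : 0 ≤ t) : Real.sin (δ / 2) * (‖z‖ + t) ≤ ‖z + t‖ := by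
  rcases le_or_gt (Real.sin (δ / 2)) 0 with hs | hs
  · exact (mul_nonpos_of_nonpos_of_nonneg hs (by positivity)).trans (norm_nonneg _)
  have hre : -(Real.cos δ * ‖z‖) ≤ z.re := by
    have h := Real.cos_le_cos_of_nonneg_of_le_pi (abs_nonneg _)
      (by linarith [abs_nonneg z.arg]) hz
    rw [Real.cos_abs, Real.cos_pi_sub] at h
    rw [← norm_mul_cos_arg]
    nlinarith [norm_nonneg z]
  have hcos : Real.sin (δ / 2) ^ 2 = (1 - Real.cos δ) / 2 := by
    rw [Real.sin_sq_eq_half_sub, mul_div_cancel₀ _ two_ne_zero]; ring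
  have hnorm : ‖z + t‖ ^ 2 = ‖z‖ ^ 2 + 2 * t * z.re + t ^ 2 := by
    simp only [Complex.sq_norm, normSq_apply, add_re, add_im, ofReal_re, ofReal_im]
    ring
  rw [← pow_le_pow_iff_left₀ (by positivity) (norm_nonneg _) two_ne_zero, hnorm, mul_pow, hcos]
  -- the difference is `(1 + cos δ) / 2 * (‖z‖ - t) ^ 2 + 2 * t * (z.re + cos δ * ‖z‖)`
  nlinarith [mul_nonneg (by linarith [Real.neg_one_le_cos δ] : (0 : ℝ) ≤ 1 + Real.cos δ)
      (sq_nonneg (‖z‖ - t)), mul_nonneg ht (by linarith : 0 ≤ z.re + Real.cos δ * ‖z‖)]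

lemma hasDerivAt_one_div_mul_add (a : ℂ) {b w : ℂ} (hw : w + b ≠ 0) :
    HasDerivAt (fun w => 1 / (a * (w + b))) (-(1 / (a * (w + b) ^ 2))) w := by
  have h := (((hasDerivAt_id' w).add_const b).inv hw).const_mul a⁻¹
  simp only [one_div, mul_inv]
  exact h.congr_deriv (by ring)

lemma isOpen_slitPlane_inter_abs_arg_lt (θ : ℝ) :
    IsOpen (slitPlane ∩ {w : ℂ | |w.arg| < θ}) :=
  ContinuousOn.isOpen_inter_preimage
    (fun _ hw => (continuousAt_arg hw).abs.continuousWithinAt) isOpen_slitPlane isOpen_Iio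

section StieltjesSeries

variable {a b : ℕ → ℝ} {δ : ℝ} {z : ℂ}

theorem hasSum_deriv_tsum_one_div_mul_add (ha : ∀ k, 0 < a k) (hb : ∀ k, 0 < b k)
    (hab : Summable fun k => 1 / (a k * b k)) (hδ : 0 < δ) (hz₀ : z ≠ 0) (hz : |z.arg| < π - δ) :
    HasSum (fun k => -(1 / ((a k : ℂ) * (z + b k) ^ 2)))
      (deriv (fun w => ∑' k, 1 / ((a k : ℂ) * (w + b k))) z) := by
  set U := slitPlane ∩ {w : ℂ | |w.arg| < π - δ}
  have hs : 0 < Real.sin (δ / 2) :=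
    Real.sin_pos_of_pos_of_lt_pi (by positivity) (by linarith [abs_nonneg z.arg])
  have hlow : ∀ w ∈ U, ∀ k, Real.sin (δ / 2) * b k ≤ ‖w + b k‖ := fun w hw k =>
    (mul_le_mul_of_nonneg_left (le_add_of_nonneg_left (norm_nonneg w)) hs.le).trans
      (sin_half_mul_le_norm_add_ofReal hδ.le hw.2.le (hb k).le)
  have hne : ∀ w ∈ U, ∀ k, w + b k ≠ 0 := fun w hw k =>
    norm_pos_iff.1 ((mul_pos hs (hb k)).trans_le (hlow w hw k))
  have hzU : z ∈ U := ⟨mem_slitPlane_iff_arg.2 ⟨by linarith [le_abs_self z.arg], hz₀⟩, hz⟩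
  have hbound : ∀ k, ∀ w ∈ U,
      ‖1 / ((a k : ℂ) * (w + b k))‖ ≤ (Real.sin (δ / 2))⁻¹ * (1 / (a k * b k)) := by
    intro k w hw
    have hab₀ := mul_pos (ha k) (mul_pos hs (hb k))
    calc ‖1 / ((a k : ℂ) * (w + b k))‖ = 1 / (a k * ‖w + b k‖) := by
          rw [norm_div, norm_one, norm_mul, norm_real, Real.norm_of_nonneg (ha k).le]
      _ ≤ 1 / (a k * (Real.sin (δ / 2) * b k)) :=
          one_div_le_one_div_of_le hab₀ (mul_le_mul_of_nonneg_left (hlow w hw k) (ha k).le)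
      _ = (Real.sin (δ / 2))⁻¹ * (1 / (a k * b k)) := by field_simp
  have h := hasSum_deriv_of_summable_norm (hab.mul_left _)
    (fun k w hw =>
      (hasDerivAt_one_div_mul_add _ (hne w hw k)).differentiableAt.differentiableWithinAt)
    (isOpen_slitPlane_inter_abs_arg_lt _) hbound hzU
  rwa [funext fun k => (hasDerivAt_one_div_mul_add _ (hne z hzU k)).deriv] at h

theorem norm_deriv_tsum_one_div_mul_add_le (ha : ∀ k, 0 < a k) (hb : ∀ k, 0 < b k)
    (hab : Summable fun k => 1 / (a k * b k)) (hδ : 0 < δ) (hz₀ : z ≠ 0) (hz : |z.arg| < π - δ)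
    {S : ℝ} (hS : ∀ n, ∑ k ∈ range n, 1 / (a k * (‖z‖ + b k) ^ 2) ≤ S) :
    ‖deriv (fun w => ∑' k, 1 / ((a k : ℂ) * (w + b k))) z‖ ≤ S / Real.sin (δ / 2) ^ 2 := by
  have hs : 0 < Real.sin (δ / 2) :=
    Real.sin_pos_of_pos_of_lt_pi (by positivity) (by linarith [abs_nonneg z.arg])
  have hterm : ∀ k, ‖-(1 / ((a k : ℂ) * (z + b k) ^ 2))‖
      ≤ 1 / (a k * (‖z‖ + b k) ^ 2) / Real.sin (δ / 2) ^ 2 := by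
    intro k
    have hpos : 0 < a k * (Real.sin (δ / 2) * (‖z‖ + b k)) ^ 2 := by
      have := hb k; have := ha k; positivity
    calc ‖-(1 / ((a k : ℂ) * (z + b k) ^ 2))‖ = 1 / (a k * ‖z + b k‖ ^ 2) := by
          rw [norm_neg, norm_div, norm_one, norm_mul, norm_pow, norm_real,
            Real.norm_of_nonneg (ha k).le]
      _ ≤ 1 / (a k * (Real.sin (δ / 2) * (‖z‖ + b k)) ^ 2) := by
          refine one_div_le_one_div_of_le hpos (mul_le_mul_of_nonneg_left ?_ (ha k).le)
          exact pow_le_pow_left₀ (by have := hb k; positivity)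
            (sin_half_mul_le_norm_add_ofReal hδ.le hz.le (hb k).le) 2
      _ = 1 / (a k * (‖z‖ + b k) ^ 2) / Real.sin (δ / 2) ^ 2 := by
          rw [mul_pow]; field_simp
  refine le_of_tendsto'
    (hasSum_deriv_tsum_one_div_mul_add ha hb hab hδ hz₀ hz).tendsto_sum_nat.norm fun n => ?_
  calc ‖∑ k ∈ range n, -(1 / ((a k : ℂ) * (z + b k) ^ 2))‖
      ≤ ∑ k ∈ range n, 1 / (a k * (‖z‖ + b k) ^ 2) / Real.sin (δ / 2) ^ 2 :=
        (norm_sum_le _ _).trans (sum_le_sum fun k _ => hterm k)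
    _ ≤ S / Real.sin (δ / 2) ^ 2 := by
        rw [← sum_div]; gcongr; exact hS n

end StieltjesSeries

lemma mul_inv_rpow_add_one_le_inv_rpow_sub {p y : ℝ} (hp : 0 ≤ p) (hy : 0 < y) :
    p * ((y + 1) ^ (p + 1))⁻¹ ≤ (y ^ p)⁻¹ - ((y + 1) ^ p)⁻¹ := by
  have hy₁ : 0 < y + 1 := by linarith
  have hu : 0 < (y + 1) / y := by positivity
  -- `((y + 1) / y) ^ p ≥ 1 + p log ((y + 1) / y) ≥ 1 + p / (y + 1)`
  have hlog : 1 / (y + 1) ≤ Real.log ((y + 1) / y) := by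
    have := Real.one_sub_inv_le_log_of_pos hu
    rwa [inv_div, one_sub_div hy₁.ne', add_sub_cancel_left] at this
  have hpow : 1 + p / (y + 1) ≤ ((y + 1) / y) ^ p := by
    rw [Real.rpow_def_of_pos hu]
    have : p / (y + 1) ≤ Real.log ((y + 1) / y) * p := by
      rw [div_eq_mul_one_div, mul_comm]; exact mul_le_mul_of_nonneg_right hlog hp
    linarith [Real.add_one_le_exp (Real.log ((y + 1) / y) * p)]
  rw [Real.div_rpow hy₁.le hy.le] at hpow
  rw [Real.rpow_add_one hy₁.ne']
  have hA := Real.rpow_pos_of_pos hy p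
  rw [le_div_iff₀ hA] at hpow
  rw [← div_eq_mul_inv, div_le_iff₀ (by positivity)]
  field_simp at hpow ⊢
  linarith

lemma sum_Ico_inv_rpow_add_one_le {p : ℝ} (hp : 0 < p) {N : ℕ} (hN : 1 ≤ N) (M : ℕ) :
    ∑ k ∈ Ico N M, (((k : ℝ) + 1) ^ (p + 1))⁻¹ ≤ ((N : ℝ) ^ p)⁻¹ / p := by
  rcases le_total M N with hMN | hNM
  · rw [Ico_eq_empty_of_le hMN, sum_empty]; positivity
  have hstep : ∀ k ∈ Ico N M, (((k : ℝ) + 1) ^ (p + 1))⁻¹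
      ≤ (((k : ℝ) ^ p)⁻¹ - (((k + 1 : ℕ) : ℝ) ^ p)⁻¹) / p := by
    intro k hk
    have hk : (0 : ℝ) < k := Nat.cast_pos.2 (hN.trans (mem_Ico.1 hk).1)
    rw [le_div_iff₀ hp, mul_comm, Nat.cast_add_one]
    exact mul_inv_rpow_add_one_le_inv_rpow_sub hp.le hk
  calc ∑ k ∈ Ico N M, (((k : ℝ) + 1) ^ (p + 1))⁻¹
      ≤ ∑ k ∈ Ico N M, (((k : ℝ) ^ p)⁻¹ - (((k + 1 : ℕ) : ℝ) ^ p)⁻¹) / p :=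
        sum_le_sum hstep
    _ = (((N : ℝ) ^ p)⁻¹ - ((M : ℝ) ^ p)⁻¹) / p := by
        rw [← sum_div]
        have h := sum_Ico_sub (fun k : ℕ => -((k : ℝ) ^ p)⁻¹) hNM
        simp only [neg_sub_neg] at h
        rw [h]
    _ ≤ ((N : ℝ) ^ p)⁻¹ / p := by
        gcongr; exact sub_le_self _ (by positivity)

lemma sum_range_one_div_mul_add_sq_le {x : ℝ} (hx : 0 < x) {b : ℕ → ℝ} (hb : ∀ k, 0 ≤ b k)
    (N : ℕ) :
    ∑ k ∈ range N, 1 / (((k : ℝ) + 1) * (x + b k) ^ 2) ≤ (1 + Real.log N) / x ^ 2 := by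
  calc ∑ k ∈ range N, 1 / (((k : ℝ) + 1) * (x + b k) ^ 2)
      ≤ ∑ k ∈ range N, 1 / ((k : ℝ) + 1) / x ^ 2 := by
        refine sum_le_sum fun k _ => ?_
        rw [div_div]
        exact one_div_le_one_div_of_le (by positivity)
          (mul_le_mul_of_nonneg_left (pow_le_pow_left₀ hx.le (le_add_of_nonneg_right (hb k)) 2)
            (by positivity))
    _ = harmonic N / x ^ 2 := by
        rw [← sum_div, harmonic]
        push_cast
        simp [one_div]
    _ ≤ (1 + Real.log N) / x ^ 2 := by
        gcongr; exact harmonic_le_one_add_log N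

lemma sum_range_one_div_mul_add_rpow_sq_le {β x : ℝ} (hβ : 0 < β) (hx : 2 ≤ x) (n : ℕ) :
    ∑ k ∈ range n, 1 / (((k : ℝ) + 1) * (x + ((k : ℝ) + 1) ^ β) ^ 2)
      ≤ (3 + 2 / β) * Real.log x / x ^ 2 := by
  set f : ℕ → ℝ := fun k => 1 / (((k : ℝ) + 1) * (x + ((k : ℝ) + 1) ^ β) ^ 2)
  have hx₀ : 0 < x := by linarith
  -- split the sum at the index where `(k + 1) ^ β` overtakes `x`
  set N := ⌈x ^ β⁻¹⌉₊
  have hx₁ : 1 ≤ x ^ β⁻¹ := Real.one_le_rpow (by linarith) (by positivity)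
  have hN₁ : 1 ≤ N := Nat.one_le_iff_ne_zero.2 (Nat.ceil_pos.2 (by positivity)).ne'
  have hxN : x ≤ (N : ℝ) ^ β := by
    calc x = (x ^ β⁻¹) ^ β := by
          rw [← Real.rpow_mul hx₀.le, inv_mul_cancel₀ hβ.ne', Real.rpow_one]
      _ ≤ (N : ℝ) ^ β := by gcongr; exact Nat.le_ceil _
  have hlogN : Real.log N ≤ Real.log 2 + Real.log x / β := by
    calc Real.log N ≤ Real.log (2 * x ^ β⁻¹) :=
          Real.log_le_log (by positivity)
            (by linarith [Nat.ceil_lt_add_one (by positivity : 0 ≤ x ^ β⁻¹)])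
      _ = Real.log 2 + Real.log x / β := by
          rw [Real.log_mul two_ne_zero (by positivity), Real.log_rpow hx₀, inv_mul_eq_div]
  have htail : ∑ k ∈ Ico N (max n N), f k ≤ (x ^ 2)⁻¹ / (2 * β) := by
    calc ∑ k ∈ Ico N (max n N), f k
        ≤ ∑ k ∈ Ico N (max n N), (((k : ℝ) + 1) ^ (2 * β + 1))⁻¹ := by
          refine sum_le_sum fun k _ => ?_
          have hk : (0 : ℝ) < k + 1 := by positivity
          rw [Real.rpow_add_one hk.ne', mul_comm 2 β, Real.rpow_mul hk.le, Real.rpow_two,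
            ← one_div, mul_comm]
          exact one_div_le_one_div_of_le (by positivity)
            (by gcongr; exact le_add_of_nonneg_left hx₀.le)
      _ ≤ ((N : ℝ) ^ (2 * β))⁻¹ / (2 * β) :=
          sum_Ico_inv_rpow_add_one_le (by positivity) hN₁ _
      _ ≤ (x ^ 2)⁻¹ / (2 * β) := by
          gcongr
          rw [mul_comm, Real.rpow_mul (by positivity), Real.rpow_two]
          gcongr
  have hlog2 := Real.log_two_gt_d9
  have hlogx : Real.log 2 ≤ Real.log x := Real.log_le_log two_pos hx
  calc ∑ k ∈ range n, f k ≤ ∑ k ∈ range (max n N), f k :=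
        sum_le_sum_of_subset_of_nonneg (range_subset_range.2 (le_max_left _ _))
          fun k _ _ => by positivity
    _ = ∑ k ∈ range N, f k + ∑ k ∈ Ico N (max n N), f k :=
        (sum_range_add_sum_Ico f (le_max_right _ _)).symm
    _ ≤ (1 + Real.log N) / x ^ 2 + (x ^ 2)⁻¹ / (2 * β) :=
        add_le_add (sum_range_one_div_mul_add_sq_le hx₀ (fun k => by positivity) N) htail
    _ = (1 + Real.log N + β⁻¹ / 2) / x ^ 2 := by field_simp
    _ ≤ (3 + 2 / β) * Real.log x / x ^ 2 := by
        gcongr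
        have := mul_le_mul_of_nonneg_left (by linarith : 1 / 2 ≤ Real.log x) (inv_nonneg.2 hβ.le)
        rw [div_eq_mul_inv] at hlogN
        rw [show (3 + 2 / β) * Real.log x = 3 * Real.log x + 2 * (β⁻¹ * Real.log x) by ring]
        linarith

lemma summable_one_div_mul_rpow (β : ℝ) (hβ : 0 < β) :
    Summable fun k : ℕ => 1 / (((k : ℝ) + 1) * ((k : ℝ) + 1) ^ β) := by
  refine ((summable_nat_add_iff 1).2
    (Real.summable_one_div_nat_rpow.2 (by linarith : 1 < 1 + β))).congr fun k => ?_
  push_cast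
  rw [Real.rpow_one_add' (by positivity) (by positivity)]

open Complex Real MeasureTheory Set Filter

theorem stmt9 (β δ : ℝ) (hβ : 0 < β) (hδ : 0 < δ)
    (K : ℂ → ℂ)
    (hK : ∀ z : ℂ, K z = ∑' k : ℕ,
      1 / ((((k : ℝ) + 1 : ℝ) : ℂ) * (z + ((((k : ℝ) + 1) ^ β : ℝ) : ℂ)))) :
    ∃ C : ℝ, ∀ z : ℂ, |z.arg| < Real.pi - δ → 2 ≤ ‖z‖ →
      ‖z * deriv K z‖ ≤ C * Real.log (‖z‖) / ‖z‖ := by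
  refine ⟨(3 + 2 / β) / Real.sin (δ / 2) ^ 2, fun z hz hz₂ => ?_⟩
  have hz₀ : z ≠ 0 := by rintro rfl; norm_num at hz₂
  have hderiv := norm_deriv_tsum_one_div_mul_add_le (a := fun k : ℕ => (k : ℝ) + 1)
    (b := fun k : ℕ => ((k : ℝ) + 1) ^ β) (fun k => by positivity) (fun k => by positivity)
    (summable_one_div_mul_rpow β hβ) hδ hz₀ hz (sum_range_one_div_mul_add_rpow_sq_le hβ hz₂)
  rw [norm_mul, funext hK]
  calc ‖z‖ * ‖deriv _ z‖
      ≤ ‖z‖ * ((3 + 2 / β) * Real.log ‖z‖ / ‖z‖ ^ 2 / Real.sin (δ / 2) ^ 2) :=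
        mul_le_mul_of_nonneg_left hderiv (norm_nonneg z)
    _ = (3 + 2 / β) / Real.sin (δ / 2) ^ 2 * Real.log ‖z‖ / ‖z‖ := by
        field_simp
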